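/- arXiv:2103.03540 — 2 statements merged into one kernel-verified Lean document; each statement's English description precedes it below -/
import Mathlib

section
/- Let m ≥ 1 and fix an index i with 1 ≤ i < m. Let X_i be the set of vectors x = (x_1,...,x_m) over the alphabet {0,1,2,3} such that x_i ≠ x_{i+1}. Then any finite concatenation of vectors from X_i has maximum run-length at most m (no m+1 consecutive equal symbols). -/
/-!
Among any `m` consecutive adjacent pairs of the concatenation there is one at positions
`k * m + (i - 1)`, `k * m + i`; both lie in the `k`-th block, whose symbols there differ.
So no constant infix can contain `m` adjacent pairs, i.e. have length `m + 1`.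
-/

/-- A sequence over `Fin 4` has maximum run-length at most `m` if every
constant infix has length at most `m`. -/
def maxRunAtMost (m : ℕ) (s : List (Fin 4)) : Prop :=
  ∀ l : List (Fin 4), l <:+: s → l.Chain' (· = ·) → l.length ≤ m

namespace List

variable {α : Type*}

theorem length_flatten_map_ofFn {m : ℕ} (L : List (Fin m → α)) :
    (L.map ofFn).flatten.length = L.length * m := by
  induction L with
  | nil => simp
  | cons v L ih => simp [ih]; ring

theorem getElem_flatten_map_ofFn {m : ℕ} (L : List (Fin m → α)) {k r : ℕ} (hk : k < L.length)
    (hr : r < m) (h : k * m + r < (L.map ofFn).flatten.length) :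
    (L.map ofFn).flatten[k * m + r] = L[k] ⟨r, hr⟩ := by
  induction L generalizing k with
  | nil => simp at hk
  | cons v L ih =>
    cases k with
    | zero => simp [getElem_append_left, hr]
    | succ k =>
      have hlen : (ofFn v).length ≤ (k + 1) * m + r := by simp [Nat.succ_mul]; omega
      simp only [map_cons, flatten_cons, getElem_append_right hlen, length_ofFn]
      simp only [Nat.succ_mul, show k * m + m + r - m = k * m + r by omega]
      exact ih (by simpa using hk) _

theorem flatten_map_ofFn_getElem_ne {m a : ℕ} (L : List (Fin m → α)) (ha : a + 1 < m)
    (hL : ∀ v ∈ L, v ⟨a, by omega⟩ ≠ v ⟨a + 1, ha⟩) (k : ℕ)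
    (h : k * m + a + 1 < (L.map ofFn).flatten.length) :
    (L.map ofFn).flatten[k * m + a] ≠ (L.map ofFn).flatten[k * m + a + 1] := by
  have hk : k < L.length := by
    rw [length_flatten_map_ofFn] at h
    exact Nat.lt_of_mul_lt_mul_right (a := m) (by omega)
  simp only [Nat.add_assoc]
  rw [getElem_flatten_map_ofFn L hk (by omega), getElem_flatten_map_ofFn L hk ha]
  exact hL _ (getElem_mem hk)

theorem exists_getElem_ne_of_periodic {s : List α} {m a : ℕ} (ha : a < m)
    (hper : ∀ k (h : k * m + a + 1 < s.length), s[k * m + a] ≠ s[k * m + a + 1]) (j : ℕ)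
    (hj : j + m < s.length) :
    ∃ p, j ≤ p ∧ p < j + m ∧ ∃ h : p + 1 < s.length, s[p] ≠ s[p + 1] := by
  have hdiv := Nat.div_add_mod' (j + m - 1 - a) m
  have hmod := Nat.mod_lt (j + m - 1 - a) (by omega : 0 < m)
  set k := (j + m - 1 - a) / m
  exact ⟨k * m + a, by omega, by omega, by omega, hper k _⟩

theorem length_le_of_infix_of_isChain_eq {s l : List α} {m : ℕ}
    (hbreak : ∀ j, j + m < s.length →
      ∃ p, j ≤ p ∧ p < j + m ∧ ∃ h : p + 1 < s.length, s[p] ≠ s[p + 1])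
    (hl : l <:+: s) (hc : l.IsChain (· = ·)) : l.length ≤ m := by
  obtain ⟨pre, suf, rfl⟩ := hl
  by_contra! hlen
  obtain ⟨p, hjp, hpj, hp, hne⟩ := hbreak pre.length (by simp; omega)
  have hget : ∀ q (hq : q < (pre ++ l ++ suf).length) t (ht : t < l.length),
      q = pre.length + t → (pre ++ l ++ suf)[q] = l[t] := by
    rintro q hq t ht rfl
    rw [getElem_append_left (by simp; omega), getElem_append_right (by omega)]
    simp
  obtain ⟨t, rfl⟩ : ∃ t, p = pre.length + t := ⟨p - pre.length, by omega⟩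
  rw [hget _ _ t (by omega) rfl, hget _ _ (t + 1) (by omega) (by omega)] at hne
  exact hne (isChain_iff_getElem.mp hc t (by omega))

end List

theorem stmt_0 (m i : ℕ) (hi1 : 1 ≤ i) (hi2 : i < m)
    (Xi : Set (Fin m → Fin 4))
    (hXi : Xi = {x : Fin m → Fin 4 | x ⟨i - 1, by omega⟩ ≠ x ⟨i, hi2⟩})
    (L : List (Fin m → Fin 4)) (hL : ∀ v ∈ L, v ∈ Xi) :
    maxRunAtMost m (L.map (fun v => List.ofFn v)).flatten := by
  obtain ⟨a, rfl⟩ : ∃ a, i = a + 1 := ⟨i - 1, by omega⟩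
  subst hXi
  intro l hl hc
  exact List.length_le_of_infix_of_isChain_eq
    (List.exists_getElem_ne_of_periodic (by omega) (List.flatten_map_ofFn_getElem_ne L hi2 hL))
    hl hc
end

section
/- For every m ≥ 2, there exists a set V of at least 3·4^{m-1} vectors in {0,1,2,3}^m such that any finite concatenation of vectors from V has run-length at most m. -/
namespace List

variable {α : Type*} {l : List α} {x y : α}

theorem IsChain.length_le_one_of_prefix_cons_cons {t : List α} (hc : l.IsChain (· = ·))
    (hxy : x ≠ y) (hl : l <+: x :: y :: t) : l.length ≤ 1 := by
  match l, hc, hl with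
  | [], _, _ | [_], _, _ => simp
  | _ :: _ :: _, hc, hl =>
    obtain ⟨rfl, rfl, -⟩ := by simpa using hl
    exact absurd (isChain_cons_cons.1 hc).1 hxy

theorem IsChain.length_lt_of_suffix_cons_cons {t : List α} (hc : l.IsChain (· = ·))
    (hxy : x ≠ y) (hl : l <:+ x :: y :: t) : l.length < (x :: y :: t).length := by
  by_contra! hlen
  rw [hl.eq_of_length_le hlen] at hc
  exact hxy (isChain_cons_cons.1 hc).1

variable {m : ℕ} {Bs : List (List α)}

theorem IsChain.length_le_one_of_prefix_flatten
    (hB : ∀ b ∈ Bs, ∃ x y t, x ≠ y ∧ b = x :: y :: t) (hc : l.IsChain (· = ·))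
    (hl : l <+: Bs.flatten) : l.length ≤ 1 := by
  cases Bs with
  | nil => simp [prefix_nil.1 hl]
  | cons b Bs =>
    obtain ⟨x, y, t, hxy, rfl⟩ := hB b mem_cons_self
    exact hc.length_le_one_of_prefix_cons_cons hxy (by simpa using hl)

theorem IsChain.length_le_of_infix_flatten
    (hB : ∀ b ∈ Bs, b.length ≤ m ∧ ∃ x y t, x ≠ y ∧ b = x :: y :: t)
    (hc : l.IsChain (· = ·)) (hl : l <:+: Bs.flatten) : l.length ≤ m := by
  induction Bs generalizing l with
  | nil => simp [infix_nil.1 hl]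
  | cons b Bs ih =>
    obtain ⟨hbm, x, y, t, hxy, rfl⟩ := hB b mem_cons_self
    have hBs : ∀ b ∈ Bs, b.length ≤ m ∧ ∃ x y t, x ≠ y ∧ b = x :: y :: t :=
      fun b hb => hB b (mem_cons_of_mem _ hb)
    rw [flatten_cons, infix_append_iff] at hl
    rcases hl with hl | hl | ⟨l₁, l₂, rfl, hl₁, hl₂⟩
    · exact hl.length_le.trans hbm
    · exact ih hBs hc hl
    · have h₁ := (hc.infix infix_append_left).length_lt_of_suffix_cons_cons hxy hl₁
      have h₂ := (hc.infix infix_append_right).length_le_one_of_prefix_flatten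
        (fun b hb => (hBs b hb).2) hl₂
      rw [length_append]
      omega

end List

theorem mul_pow_le_card_setOf_apply_zero_ne_apply_one (n k : ℕ) :
    n * (n + 1) ^ (k + 1) ≤ Nat.card {v : Fin (k + 2) → Fin (n + 1) | v 0 ≠ v 1} := by
  let f : Fin n × (Fin (k + 1) → Fin (n + 1)) → {v : Fin (k + 2) → Fin (n + 1) | v 0 ≠ v 1} :=
    fun p => ⟨Fin.cons (p.2 0 + p.1.succ) p.2, by simp [p.1.succ_ne_zero]⟩
  have hf : Function.Injective f := by
    rintro ⟨d, w⟩ ⟨d', w'⟩ h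
    have h' : (Fin.cons (w 0 + d.succ) w : Fin (k + 2) → Fin (n + 1)) =
        Fin.cons (w' 0 + d'.succ) w' := congrArg Subtype.val h
    obtain ⟨hhead, rfl⟩ := Fin.cons_injective2 h'
    simpa using hhead
  simpa using Nat.card_le_card_of_injective f hf

theorem stmt_2 (m : ℕ) (hm : 2 ≤ m) :
    ∃ V : Set (Fin m → Fin 4),
      3 * 4 ^ (m - 1) ≤ Nat.card V ∧
      ∀ L : List (Fin m → Fin 4), (∀ v ∈ L, v ∈ V) →
        maxRunAtMost m (L.map (fun v => List.ofFn v)).flatten := by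
  obtain ⟨k, rfl⟩ : ∃ k, m = k + 2 := ⟨m - 2, by omega⟩
  refine ⟨{v | v 0 ≠ v 1}, mul_pow_le_card_setOf_apply_zero_ne_apply_one 3 k,
    fun L hL l hl hc => ?_⟩
  refine List.IsChain.length_le_of_infix_flatten (fun b hb => ?_) hc hl
  obtain ⟨v, hv, rfl⟩ := List.mem_map.1 hb
  exact ⟨List.length_ofFn.le, v 0, v 1, List.ofFn fun i => v i.succ.succ, hL v hv,
    by simp only [List.ofFn_succ]; rfl⟩
end
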